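/- In any swap Kripke model for DmbCcl, for every world w and every formula α: the first coordinate of v_w(∘α) equals the second coordinate of v_w(α ∧ ¬α). Consequently, every instance of the da Costa axiom (cl) ¬(α ∧ ¬α) → ∘α is true at every world of every swap Kripke model for DmbCcl. -/

import Mathlib

/-- Formulas over the signature Σ = {∧, ∨, →, ¬, ∘, O}, with countably many
propositional variables. -/
inductive Form : Type
  | var : ℕ → Form
  | and : Form → Form → Form
  | or : Form → Form → Form
  | imp : Form → Form → Form
  | neg : Form → Form
  | circ : Form → Form
  | obl : Form → Form

namespace Form
/-- ⊥_α := (α ∧ ¬α) ∧ ∘α -/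
def bot (α : Form) : Form := (α.and α.neg).and α.circ
end Form

/-- Theorems of DmbCcl: the DmbC axioms (CPL⁺, (EM), (bc), (O-K), (O-E)) plus the
da Costa axiom (cl) ¬(α ∧ ¬α) → ∘α, with Modus Ponens and O-necessitation. -/
inductive ThmDmbCcl : Form → Prop
  | A1 (α β : Form) : ThmDmbCcl (α.imp (β.imp α))
  | A2 (α β γ : Form) : ThmDmbCcl ((α.imp (β.imp γ)).imp ((α.imp β).imp (α.imp γ)))
  | A3 (α β : Form) : ThmDmbCcl (α.imp (β.imp (α.and β)))
  | A4 (α β : Form) : ThmDmbCcl ((α.and β).imp α)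
  | A5 (α β : Form) : ThmDmbCcl ((α.and β).imp β)
  | A6 (α β : Form) : ThmDmbCcl (α.imp (α.or β))
  | A7 (α β : Form) : ThmDmbCcl (β.imp (α.or β))
  | A8 (α β γ : Form) : ThmDmbCcl ((α.imp γ).imp ((β.imp γ).imp ((α.or β).imp γ)))
  | A9 (α β : Form) : ThmDmbCcl (((α.imp β).imp α).imp α)
  | EM (α : Form) : ThmDmbCcl (α.or α.neg)
  | bc (α β : Form) : ThmDmbCcl (α.circ.imp (α.imp (α.neg.imp β)))
  | cl (α : Form) : ThmDmbCcl ((α.and α.neg).neg.imp α.circ)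
  | OK (α β : Form) : ThmDmbCcl ((α.imp β).obl.imp (α.obl.imp β.obl))
  | OE (α : Form) : ThmDmbCcl (α.bot.obl.imp α.bot)
  | mp {α β : Form} : ThmDmbCcl (α.imp β) → ThmDmbCcl α → ThmDmbCcl β
  | nec {α : Form} : ThmDmbCcl α → ThmDmbCcl α.obl

/-- conj γ [γ₂,…,γ_k] = γ ∧ γ₂ ∧ … ∧ γ_k -/
def conj (γ : Form) : List Form → Form
  | [] => γ
  | δ :: l => γ.and (conj δ l)

/-- Γ ⊢_DmbCcl φ iff ⊢ φ or ⊢ (γ₁ ∧ … ∧ γ_k) → φ for some γ₁,…,γ_k ∈ Γ, k ≥ 1. -/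
def DerivDmbCcl (Γ : Set Form) (φ : Form) : Prop :=
  ThmDmbCcl φ ∨ ∃ (γ : Form) (l : List Form),
    (∀ δ ∈ γ :: l, δ ∈ Γ) ∧ ThmDmbCcl ((conj γ l).imp φ)

/-- The three snapshots T = (1,0), t = (1,1), F = (0,1). -/
inductive SV : Type
  | T | t | F
deriving DecidableEq

/-- First coordinate of a snapshot. -/
def SV.p1 : SV → Bool
  | .T => true | .t => true | .F => false

/-- Second coordinate of a snapshot. -/
def SV.p2 : SV → Bool
  | .T => false | .t => true | .F => true

/-- Designated values: D = {T, t}, i.e. first coordinate is 1. -/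
def SV.desig (a : SV) : Prop := a.p1 = true

/-- Swap Kripke model conditions for DmbCcl on a serial frame (W,R):
the DmbCciw conditions (with ∘ interpreted by ∘̃₁) plus the restriction
that v_w(α) = t implies v_w(α ∧ ¬α) = T. -/
structure IsModelDmbCcl {W : Type} (R : W → W → Prop) (v : W → Form → SV) : Prop where
  serial : ∀ w, ∃ w', R w w'
  and_ : ∀ w α β, (v w (α.and β)).p1 = ((v w α).p1 && (v w β).p1)
  or_ : ∀ w α β, (v w (α.or β)).p1 = ((v w α).p1 || (v w β).p1)
  imp_ : ∀ w α β, (v w (α.imp β)).p1 = (!(v w α).p1 || (v w β).p1)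
  neg_ : ∀ w α, (v w α.neg).p1 = (v w α).p2
  circ_ : ∀ w α, (v w α.circ).p1 = !((v w α).p1 && (v w α).p2)
  obl_ : ∀ w α, ((v w α.obl).p1 = true ↔ ∀ w', R w w' → (v w' α).p1 = true)
  cl_ : ∀ w α, v w α = SV.t → v w (α.and α.neg) = SV.T

/-- Γ ⊨_DmbCcl φ : semantic consequence over all swap Kripke models for DmbCcl. -/
def SemDmbCcl (Γ : Set Form) (φ : Form) : Prop :=
  ∀ (W : Type) (R : W → W → Prop) (v : W → Form → SV), Nonempty W →
    IsModelDmbCcl R v → ∀ w : W, (∀ γ ∈ Γ, (v w γ).desig) → (v w φ).desig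

theorem SV.eq_F_of_p1_eq_false {a : SV} (h : a.p1 = false) : a = SV.F := by
  cases a <;> simp_all [SV.p1]

theorem SV.p1_and_p2_eq_true_iff {a : SV} : (a.p1 && a.p2) = true ↔ a = SV.t := by
  cases a <;> decide

namespace IsModelDmbCcl

variable {W : Type} {R : W → W → Prop} {v : W → Form → SV}

theorem and_neg_p1 (hM : IsModelDmbCcl R v) (w : W) (α : Form) :
    (v w (α.and α.neg)).p1 = ((v w α).p1 && (v w α).p2) := by
  rw [hM.and_, hM.neg_]

/-- Only the value `t` makes `α ∧ ¬α` true; there the (cl) condition forces the value `T`,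
and otherwise the contradiction takes the value `F`. -/
theorem circ_p1_eq_and_neg_p2 (hM : IsModelDmbCcl R v) (w : W) (α : Form) :
    (v w α.circ).p1 = (v w (α.and α.neg)).p2 := by
  rw [hM.circ_, ← hM.and_neg_p1]
  by_cases hα : v w α = SV.t
  · rw [hM.cl_ w α hα]
    rfl
  · have hcontra : (v w (α.and α.neg)).p1 = false := by
      rwa [hM.and_neg_p1, Bool.eq_false_iff, ne_eq, SV.p1_and_p2_eq_true_iff]
    rw [SV.eq_F_of_p1_eq_false hcontra]
    rfl

theorem desig_neg_imp_of_p1_eq_p2 (hM : IsModelDmbCcl R v) (w : W) {φ ψ : Form}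
    (h : (v w ψ).p1 = (v w φ).p2) : (v w (φ.neg.imp ψ)).desig := by
  rw [SV.desig, hM.imp_, hM.neg_, h, Bool.not_or_self]

end IsModelDmbCcl

/-- In any swap Kripke model for DmbCcl, (∘α)_{(1,w)} = (α ∧ ¬α)_{(2,w)};
consequently every instance of the da Costa axiom (cl) ¬(α ∧ ¬α) → ∘α is true
at every world. -/
theorem cl_valid_DmbCcl {W : Type} (R : W → W → Prop) (v : W → Form → SV)
    (hM : IsModelDmbCcl R v) (w : W) (α : Form) :
    (v w α.circ).p1 = (v w (α.and α.neg)).p2 ∧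
    (v w ((α.and α.neg).neg.imp α.circ)).desig :=
  have key := hM.circ_p1_eq_and_neg_p2 w α
  ⟨key, hM.desig_neg_imp_of_p1_eq_p2 w key⟩
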